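/- Corollary (the optimal budget is a cumulative class size): let v ≥ 0 and k > 0, and suppose every password has positive probability, with the distinct probability values p_1 > p_2 > … > p_{n'} > 0 attained by exactly c_1, …, c_{n'} passwords respectively (so Σ_{m=1}^{n'} c_m = n). If (π*, B*) is an optimal strategy, i.e., U(v,k,π*,B*) ≥ U(v,k,π,B) for all strategies (π,B), then B* lies in the set {0, c_1, c_1 + c_2, …, Σ_{m=1}^{n'} c_m}. -/

import Mathlib

open scoped Classical

/- Context: P finite set of passwords, p a probability distribution on P,
strategies (π, B) with π : Fin (Fintype.card P) ≃ P (0-indexed bijection) and B ≤ |P|.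
λ(π, B) = Σ_{i=1}^{B} p(π(i)), and
U(v,k,π,B) = v·λ(π,B) − k·Σ_{i=1}^{B} (1 − λ(π, i−1)). -/

variable {P : Type*} [Fintype P]

noncomputable def lam (p : P → ℝ) (π : Fin (Fintype.card P) ≃ P) (B : ℕ) : ℝ :=
  ∑ i ∈ Finset.univ.filter (fun i : Fin (Fintype.card P) => (i : ℕ) < B), p (π i)

noncomputable def U (p : P → ℝ) (v k : ℝ) (π : Fin (Fintype.card P) ≃ P) (B : ℕ) : ℝ :=
  v * lam p π B - k * ∑ i ∈ Finset.range B, (1 - lam p π i)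

/-! Let `a` be the probability of the last guess of an optimal strategy with budget `B > 0`.
Swapping the guesses at positions `i < j < B` changes the utility by `k (j - i) (p_j - p_i)`, so
an optimal order is nonincreasing on the guessed positions and every guess has probability at
least `a`. Guessing an unguessed password `y` next, instead of stopping, adds
`v p y - k (1 - λ_B)`, while the last guess added `v a - k (1 - λ_B) - k a ≥ 0`; optimality thus
forces `v (a - p y) ≥ k a > 0`, i.e. `p y < a`. Hence the guessed set is `{x | a ≤ p x}`, the union
of the classes with probability at least `a`. -/

open Finset

def IsOptimal (p : P → ℝ) (v k : ℝ) (π : Fin (Fintype.card P) ≃ P) (B : ℕ) : Prop :=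
  B ≤ Fintype.card P ∧
    ∀ (π' : Fin (Fintype.card P) ≃ P) (B' : ℕ), B' ≤ Fintype.card P →
      U p v k π' B' ≤ U p v k π B

theorem sum_mul_comp_swap {ι R : Type*} [DecidableEq ι] [CommRing R] (s : Finset ι)
    (f g : ι → R) {i j : ι} (hi : i ∈ s) (hj : j ∈ s) :
    ∑ l ∈ s, f (Equiv.swap i j l) * g l = ∑ l ∈ s, f l * g l + (f j - f i) * (g i - g j) := by
  rcases eq_or_ne i j with rfl | hij
  · simp
  have hpair : ∑ l ∈ s, (f (Equiv.swap i j l) - f l) * g l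
      = ∑ l ∈ {i, j}, (f (Equiv.swap i j l) - f l) * g l := by
    refine (sum_subset (s₁ := {i, j}) (by simp [insert_subset_iff, hi, hj]) fun l _ hl => ?_).symm
    simp only [mem_insert, mem_singleton, not_or] at hl
    simp [Equiv.swap_apply_of_ne_of_ne hl.1 hl.2]
  rw [sum_pair hij] at hpair
  simp only [sub_mul, sum_sub_distrib, Equiv.swap_apply_left, Equiv.swap_apply_right] at hpair
  linear_combination hpair

section Strategy

variable {p : P → ℝ} {v k : ℝ} {π π' : Fin (Fintype.card P) ≃ P}

theorem lam_succ (p : P → ℝ) (π : Fin (Fintype.card P) ≃ P) (i : Fin (Fintype.card P)) :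
    lam p π (i + 1) = lam p π i + p (π i) := by
  have : univ.filter (fun l : Fin (Fintype.card P) => (l : ℕ) < i + 1)
      = insert i (univ.filter fun l : Fin (Fintype.card P) => (l : ℕ) < i) := by
    ext l
    simp only [mem_filter, mem_univ, true_and, mem_insert, Fin.ext_iff]
    omega
  rw [lam, this, sum_insert (by simp), add_comm]
  rfl

theorem U_succ (p : P → ℝ) (v k : ℝ) (π : Fin (Fintype.card P) ≃ P) (i : Fin (Fintype.card P)) :
    U p v k π (i + 1) = U p v k π i + (v * p (π i) - k * (1 - lam p π i)) := by
  rw [U, U, lam_succ, sum_range_succ]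
  ring

theorem lam_congr {B i : ℕ} (h : ∀ j : Fin (Fintype.card P), (j : ℕ) < B → π j = π' j)
    (hi : i ≤ B) : lam p π i = lam p π' i :=
  sum_congr rfl fun j hj => by rw [h j ((mem_filter.1 hj).2.trans_le hi)]

theorem U_congr {B : ℕ} (h : ∀ j : Fin (Fintype.card P), (j : ℕ) < B → π j = π' j) :
    U p v k π B = U p v k π' B := by
  rw [U, U, lam_congr h le_rfl]
  congr 2
  exact sum_congr rfl fun i hi => by rw [lam_congr h (mem_range.1 hi).le]

theorem sum_range_lam (p : P → ℝ) (π : Fin (Fintype.card P) ≃ P) (B : ℕ) :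
    ∑ b ∈ range B, lam p π b = ∑ i ∈ univ.filter (fun i : Fin (Fintype.card P) => (i : ℕ) < B),
      p (π i) * ((B : ℝ) - 1 - (i : ℕ)) := by
  induction B with
  | zero => simp
  | succ B ih =>
    -- the position `B` added to the filter carries weight `B + 1 - 1 - B = 0`
    rw [sum_range_succ, ih, lam, ← sum_add_distrib]
    refine (sum_congr rfl fun i _ => by push_cast; ring).trans
      (sum_subset (fun i => by simp only [mem_filter, mem_univ, true_and]; omega)
        fun i hi hi' => ?_)
    simp only [mem_filter, mem_univ, true_and, not_lt] at hi hi'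
    rw [show (i : ℕ) = B by omega]
    push_cast
    ring

theorem U_eq_sum (p : P → ℝ) (v k : ℝ) (π : Fin (Fintype.card P) ≃ P) (B : ℕ) :
    U p v k π B = ∑ i ∈ univ.filter (fun i : Fin (Fintype.card P) => (i : ℕ) < B),
      p (π i) * (v + k * ((B : ℝ) - 1 - (i : ℕ))) - k * B := by
  rw [U, lam, sum_sub_distrib, sum_range_lam]
  simp only [sum_const, card_range, nsmul_eq_mul, mul_one, mul_add, sum_add_distrib, ← sum_mul,
    mul_left_comm _ k, ← mul_sum]
  ring

theorem U_swap (p : P → ℝ) (v k : ℝ) (π : Fin (Fintype.card P) ≃ P) {B : ℕ}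
    {i j : Fin (Fintype.card P)} (hi : (i : ℕ) < B) (hj : (j : ℕ) < B) :
    U p v k ((Equiv.swap i j).trans π) B
      = U p v k π B + k * ((j : ℕ) - (i : ℕ)) * (p (π j) - p (π i)) := by
  rw [U_eq_sum, U_eq_sum]
  simp only [Equiv.trans_apply]
  rw [sum_mul_comp_swap _ (fun l => p (π l)) _ (by simpa using hi) (by simpa using hj)]
  ring

theorem IsOptimal.antitoneOn {B : ℕ} (hopt : IsOptimal p v k π B) (hk : 0 < k) :
    AntitoneOn (fun i => p (π i)) {i | (i : ℕ) < B} := by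
  intro i hi j hj hij
  rcases hij.eq_or_lt with rfl | hlt
  · rfl
  have hswap := hopt.2 ((Equiv.swap i j).trans π) B hopt.1
  rw [U_swap p v k π hi hj] at hswap
  have hgap : 0 < k * ((j : ℕ) - (i : ℕ) : ℝ) := mul_pos hk (by simpa using hlt)
  exact sub_nonpos.1 (nonpos_of_mul_nonpos_right (by linarith) hgap)

theorem IsOptimal.unguessed_lt_last {i j : Fin (Fintype.card P)}
    (hopt : IsOptimal p v k π (i + 1)) (hv : 0 ≤ v) (hk : 0 < k) (hpos : 0 < p (π i))
    (hij : i < j) : p (π j) < p (π i) := by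
  set b : Fin (Fintype.card P) := ⟨i + 1, by omega⟩
  set π' := (Equiv.swap b j).trans π
  have hagree : ∀ l : Fin (Fintype.card P), (l : ℕ) < i + 1 → π' l = π l := fun l hl => by
    rw [Equiv.trans_apply, Equiv.swap_apply_of_ne_of_ne]
    · rintro rfl
      simp [b] at hl
    · rintro rfl
      omega
  have hstop := hopt.2 π i (by omega)
  have hmore := hopt.2 π' (b + 1) (show (i : ℕ) + 1 + 1 ≤ Fintype.card P by omega)
  have hb : (b : ℕ) = i + 1 := rfl
  have hnext : π' b = π j := by simp [π']
  rw [U_succ] at hstop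
  rw [U_succ, hnext, hb, U_congr hagree, lam_congr hagree le_rfl, lam_succ] at hmore
  by_contra hle
  nlinarith [mul_nonneg hv (sub_nonneg.2 (not_lt.1 hle)), mul_pos hk hpos]

theorem IsOptimal.card_filter_le_last {i : Fin (Fintype.card P)}
    (hopt : IsOptimal p v k π (i + 1)) (hv : 0 ≤ v) (hk : 0 < k) (hpos : 0 < p (π i)) :
    #(univ.filter fun x => p (π i) ≤ p x) = i + 1 := by
  have hguessed : univ.filter (fun x => p (π i) ≤ p x) = (Iic i).map π.toEmbedding := by
    ext x
    obtain ⟨l, rfl⟩ := π.surjective x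
    simp only [mem_filter, mem_univ, true_and, mem_map_equiv, Equiv.symm_apply_apply, mem_Iic]
    constructor
    · intro hle
      by_contra hl
      exact (hopt.unguessed_lt_last hv hk hpos (not_le.1 hl)).not_ge hle
    · intro hl
      exact hopt.antitoneOn hk (show (l : ℕ) < i + 1 by omega) (Nat.lt_succ_self i) hl
  rw [hguessed, card_map, Fin.card_Iic]

end Strategy

theorem card_filter_le_eq_sum_card_classes {α β : Type*} [Fintype α] [LinearOrder β]
    (f : α → β) {n' : ℕ} {vals : Fin n' → β} {c : Fin n' → ℕ} (hanti : StrictAnti vals)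
    (hcount : ∀ m, #(univ.filter fun x => f x = vals m) = c m)
    (hcover : ∀ x, ∃ m, f x = vals m) (t : Fin n') :
    #(univ.filter fun x => vals t ≤ f x)
      = ∑ m ∈ univ.filter (fun m : Fin n' => (m : ℕ) < t + 1), c m := by
  have hclasses : univ.filter (fun x => vals t ≤ f x) =
      (univ.filter fun m : Fin n' => (m : ℕ) < t + 1).biUnion
        fun m => univ.filter fun x => f x = vals m := by
    ext x
    simp only [mem_filter, mem_univ, true_and, mem_biUnion]
    constructor
    · intro hx
      obtain ⟨m, hm⟩ := hcover x
      refine ⟨m, ?_, hm⟩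
      have := hanti.le_iff_ge.1 (hm ▸ hx)
      rw [Fin.le_def] at this
      omega
    · rintro ⟨m, hm, hx⟩
      exact hx ▸ hanti.antitone (Fin.le_def.2 (by omega))
  rw [hclasses, card_biUnion]
  · exact sum_congr rfl fun m _ => hcount m
  · intro m _ m' _ hne
    refine disjoint_left.2 fun x hx hx' => hne (hanti.injective ?_)
    simp only [mem_filter] at hx hx'
    exact hx.2.symm.trans hx'.2

theorem optimal_budget_is_cumulative_class_size_general (p : P → ℝ)
    (v k : ℝ) (hv : 0 ≤ v) (hk : 0 < k)
    (n' : ℕ) (pvals : Fin n' → ℝ) (c : Fin n' → ℕ)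
    (hanti : StrictAnti pvals) (hppos : ∀ m, 0 < pvals m)
    (hcount : ∀ m, (Finset.univ.filter (fun pw : P => p pw = pvals m)).card = c m)
    (hcover : ∀ pw : P, ∃ m, p pw = pvals m)
    (πs : Fin (Fintype.card P) ≃ P) (Bs : ℕ) (hBs : Bs ≤ Fintype.card P)
    (hopt : ∀ (π : Fin (Fintype.card P) ≃ P) (B : ℕ), B ≤ Fintype.card P →
      U p v k π B ≤ U p v k πs Bs) :
    ∃ t : ℕ, t ≤ n' ∧
      Bs = ∑ m ∈ Finset.univ.filter (fun m : Fin n' => (m : ℕ) < t), c m := by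
  rcases Nat.eq_zero_or_pos Bs with rfl | hB
  · exact ⟨0, Nat.zero_le _, by simp⟩
  obtain ⟨i, rfl⟩ : ∃ i : Fin (Fintype.card P), Bs = i + 1 :=
    ⟨⟨Bs - 1, by omega⟩, by simp only; omega⟩
  obtain ⟨t, ht⟩ := hcover (πs i)
  have hpos : 0 < p (πs i) := ht ▸ hppos t
  refine ⟨t + 1, t.isLt, ?_⟩
  have hopt' : IsOptimal p v k πs (i + 1) := ⟨hBs, hopt⟩
  rw [← hopt'.card_filter_le_last hv hk hpos, ht,
    card_filter_le_eq_sum_card_classes p hanti hcount hcover]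

/-- Corollary (the optimal budget is a cumulative class size): let v ≥ 0, k > 0, and
suppose every password takes one of the distinct probability values
p_1 > p_2 > … > p_{n'} > 0, attained by exactly c_1, …, c_{n'} passwords respectively.
If (π*, B*) is an optimal strategy then B* ∈ {0, c_1, c_1 + c_2, …, Σ_m c_m}. -/
theorem optimal_budget_is_cumulative_class_size (p : P → ℝ) (hp : ∀ pw, 0 ≤ p pw)
    (hsum : ∑ pw, p pw = 1) (v k : ℝ) (hv : 0 ≤ v) (hk : 0 < k)
    (n' : ℕ) (pvals : Fin n' → ℝ) (c : Fin n' → ℕ)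
    (hanti : StrictAnti pvals) (hppos : ∀ m, 0 < pvals m)
    (hcount : ∀ m, (Finset.univ.filter (fun pw : P => p pw = pvals m)).card = c m)
    (hcover : ∀ pw : P, ∃ m, p pw = pvals m)
    (πs : Fin (Fintype.card P) ≃ P) (Bs : ℕ) (hBs : Bs ≤ Fintype.card P)
    (hopt : ∀ (π : Fin (Fintype.card P) ≃ P) (B : ℕ), B ≤ Fintype.card P →
      U p v k π B ≤ U p v k πs Bs) :
    ∃ t : ℕ, t ≤ n' ∧
      Bs = ∑ m ∈ Finset.univ.filter (fun m : Fin n' => (m : ℕ) < t), c m :=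
  optimal_budget_is_cumulative_class_size_general p v k hv hk n' pvals c hanti hppos hcount hcover
    πs Bs hBs hopt
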